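/- Theorem (fast convergence of Simplified Rational Pavlov on the cycle). For every p ∈ [0.699, 1] there exists a constant ω > 0 such that for every n ≥ 3, every initial configuration, and every ε ∈ (0,1): if t ≥ (n/ω)·log(n/ε), then the probability that S_t is not the all-cooperate configuration is at most ε. -/
import Mathlib


open scoped Classical

/-- A configuration of the `n`-cycle: `true` = cooperate, `false` = defect. -/
abbrev Config (n : ℕ) := ZMod n → Bool

/-- Probability that, when the edge `{i, i+1}` is selected for play, the
Simplified Rational Pavlov update turns configuration `S` into configuration `T`:
from a `true`/`true` pair nothing changes; from a mixed pair both become `false`;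
from a `false`/`false` pair, with probability `p` both become `true` and with
probability `1 - p` nothing changes. -/
noncomputable def srpUpdProb (p : ℝ) {n : ℕ} (S : Config n) (i : ZMod n)
    (T : Config n) : ℝ :=
  if S i = true ∧ S (i + 1) = true then
    (if T = S then 1 else 0)
  else if S i = false ∧ S (i + 1) = false then
    (if T = Function.update (Function.update S i true) (i + 1) true then p else 0)
      + (if T = S then 1 - p else 0)
  else
    (if T = Function.update (Function.update S i false) (i + 1) false then 1 else 0)

/-- One-step transition probability of the Simplified Rational Pavlov chain on the
`n`-cycle: an edge `{i, i+1}` is chosen uniformly at random and the two players update. -/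
noncomputable def srpStepProb (p : ℝ) {n : ℕ} [NeZero n] (S T : Config n) : ℝ :=
  (1 / (n : ℝ)) * ∑ i : ZMod n, srpUpdProb p S i T

/-- Probability that the SRP chain started at `S0`, run for `t` steps, produces a
trajectory `σ : Fin (t+1) → Config n` satisfying the event `E`. -/
noncomputable def srpTrajProb (p : ℝ) {n : ℕ} [NeZero n] (S0 : Config n) (t : ℕ)
    (E : (Fin (t + 1) → Config n) → Prop) : ℝ :=
  ∑ σ : Fin (t + 1) → Config n,
    (if σ 0 = S0 ∧ E σ then ∏ s : Fin t, srpStepProb p (σ s.castSucc) (σ s.succ) else 0)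

def wq : Bool → Bool → Bool → Bool → Bool → ℤ
  | false, false, false, false, false => 2787
  | false, false, false, false, true => 2651
  | false, false, false, true, false => 2699
  | false, false, false, true, true => 2829
  | false, false, true, false, false => 2499
  | false, false, true, false, true => 2698
  | false, false, true, true, false => 2278
  | false, false, true, true, true => 1783
  | false, true, false, false, false => 2949
  | false, true, false, false, true => 2824
  | false, true, false, true, false => 2835
  | false, true, false, true, true => 2878
  | false, true, true, false, false => 2659
  | false, true, true, false, true => 2825
  | false, true, true, true, false => 2501
  | false, true, true, true, true => 2905
  | true, false, false, false, false => 2485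
  | true, false, false, false, true => 3039
  | true, false, false, true, false => 2368
  | true, false, false, true, true => 2199
  | true, false, true, false, false => 2716
  | true, false, true, false, true => 2861
  | true, false, true, true, false => 2671
  | true, false, true, true, true => 2894
  | true, true, false, false, false => 2505
  | true, true, false, false, true => 2233
  | true, true, false, true, false => 2646
  | true, true, false, true, true => 2663
  | true, true, true, false, false => 1791
  | true, true, true, false, true => 2779
  | true, true, true, true, false => 1294
  | true, true, true, true, true => 0

def rq : Bool → Bool → Bool → Bool → Bool → Bool → ℤ
  | false, false, false, false, false, false => 0
  | false, false, false, false, false, true => 95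
  | false, false, false, false, true, false => 0
  | false, false, false, false, true, true => -136
  | false, false, false, true, false, false => 0
  | false, false, false, true, false, true => 106
  | false, false, false, true, true, false => 0
  | false, false, false, true, true, true => -671
  | false, false, true, false, false, false => 0
  | false, false, true, false, false, true => -139
  | false, false, true, false, true, false => 0
  | false, false, true, false, true, true => 199
  | false, false, true, true, false, false => 0
  | false, false, true, true, false, true => 347
  | false, false, true, true, true, false => 496
  | false, false, true, true, true, true => 0
  | false, true, false, false, false, false => 0
  | false, true, false, false, false, true => 880
  | false, true, false, false, true, false => 0
  | false, true, false, false, true, true => -570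
  | false, true, false, true, false, false => 0
  | false, true, false, true, false, true => -30
  | false, true, false, true, true, false => 0
  | false, true, false, true, true, true => 43
  | false, true, true, false, false, false => 0
  | false, true, true, false, false, true => -166
  | false, true, true, false, true, false => 0
  | false, true, true, false, true, true => 166
  | false, true, true, true, false, false => 0
  | false, true, true, true, false, true => 1727
  | false, true, true, true, true, false => 0
  | false, true, true, true, true, true => -3002
  | true, false, false, false, false, false => 564
  | true, false, false, false, false, true => 367
  | true, false, false, false, true, false => -1130
  | true, false, false, false, true, true => -576
  | true, false, false, true, false, false => 152
  | true, false, false, true, false, true => 269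
  | true, false, false, true, true, false => 274
  | true, false, false, true, true, true => 106
  | true, false, true, false, false, false => -431
  | true, false, true, false, false, true => -576
  | true, false, true, false, true, false => -145
  | true, false, true, false, true, true => 48
  | true, false, true, true, false, false => -681
  | true, false, true, true, false, true => -904
  | true, false, true, true, true, false => -2253
  | true, false, true, true, true, true => -2030
  | true, true, false, false, false, false => 302
  | true, true, false, false, false, true => 492
  | true, true, false, false, true, false => 331
  | true, true, false, false, true, true => 59
  | true, true, false, true, false, false => -217
  | true, true, false, true, false, true => -234
  | true, true, false, true, true, false => -392
  | true, true, false, true, true, true => -375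
  | true, true, true, false, false, false => 1116
  | true, true, true, false, false, true => 425
  | true, true, true, false, true, false => -607
  | true, true, true, false, true, true => 381
  | true, true, true, true, false, false => 868
  | true, true, true, true, false, true => 1773
  | true, true, true, true, true, false => 1207
  | true, true, true, true, true, true => -93

def pe0 (x y : Bool) (worig wff : ℤ) : ℤ := if x = y then 0 else wff - worig
def pe1 (x y : Bool) (worig wtt : ℤ) : ℤ := if x || y then 0 else wtt - worig

/-- `1000 ×` the local certificate quantity, with `pz = 1000 p`. -/
def certZ (pz : ℤ) (a0 a1 a2 a3 a4 a5 a6 : Bool) : ℤ :=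
  1000 * pe0 a0 a1 (wq a1 a2 a3 a4 a5) (wq false a2 a3 a4 a5)
  + pz * pe1 a0 a1 (wq a1 a2 a3 a4 a5) (wq true a2 a3 a4 a5)
  + 1000 * pe0 a1 a2 (wq a1 a2 a3 a4 a5) (wq false false a3 a4 a5)
  + pz * pe1 a1 a2 (wq a1 a2 a3 a4 a5) (wq true true a3 a4 a5)
  + 1000 * pe0 a2 a3 (wq a1 a2 a3 a4 a5) (wq a1 false false a4 a5)
  + pz * pe1 a2 a3 (wq a1 a2 a3 a4 a5) (wq a1 true true a4 a5)
  + 1000 * pe0 a3 a4 (wq a1 a2 a3 a4 a5) (wq a1 a2 false false a5)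
  + pz * pe1 a3 a4 (wq a1 a2 a3 a4 a5) (wq a1 a2 true true a5)
  + 1000 * pe0 a4 a5 (wq a1 a2 a3 a4 a5) (wq a1 a2 a3 false false)
  + pz * pe1 a4 a5 (wq a1 a2 a3 a4 a5) (wq a1 a2 a3 true true)
  + 1000 * pe0 a5 a6 (wq a1 a2 a3 a4 a5) (wq a1 a2 a3 a4 false)
  + pz * pe1 a5 a6 (wq a1 a2 a3 a4 a5) (wq a1 a2 a3 a4 true)
  + 50 * wq a1 a2 a3 a4 a5
  + 1000 * (rq a0 a1 a2 a3 a4 a5 - rq a1 a2 a3 a4 a5 a6)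

set_option maxRecDepth 40000 in
lemma certZ_nonpos : ∀ a0 a1 a2 a3 a4 a5 a6 : Bool,
    certZ 699 a0 a1 a2 a3 a4 a5 a6 ≤ 0 ∧ certZ 1000 a0 a1 a2 a3 a4 a5 a6 ≤ 0 := by
  decide

lemma wq_nonneg : ∀ a b c d e : Bool, 0 ≤ wq a b c d e := by decide
lemma wq_le : ∀ a b c d e : Bool, wq a b c d e ≤ 3039 := by decide
lemma wq_ge_one : ∀ b c d e : Bool, 1 ≤ wq false b c d e := by decide

section ZLayer

variable {n : ℕ} [NeZero n]

/-- Both members of the pair `{i, i+1}` set to `v`. -/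
def updC (S : Config n) (i : ZMod n) (v : Bool) : Config n :=
  Function.update (Function.update S i v) (i + 1) v

def winZ (S : Config n) (j : ZMod n) : ℤ :=
  wq (S j) (S (j+1)) (S (j+2)) (S (j+3)) (S (j+4))

def phiZ (S : Config n) : ℤ := ∑ j : ZMod n, winZ S j

def e0Z (S : Config n) (i : ZMod n) : ℤ :=
  if S i = S (i+1) then phiZ S else phiZ (updC S i false)

def e1Z (S : Config n) (i : ZMod n) : ℤ :=
  if S i = false ∧ S (i+1) = false then phiZ (updC S i true) - phiZ S else 0

def cZ (pz : ℤ) (S : Config n) (i j : ZMod n) : ℤ :=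
  1000 * ((if S i = S (i+1) then winZ S j else winZ (updC S i false) j) - winZ S j)
  + pz * (if S i = false ∧ S (i+1) = false then winZ (updC S i true) j - winZ S j else 0)

abbrev driftZstmt (n : ℕ) [NeZero n] (pz : ℤ) : Prop :=
  ∀ S : Config n,
    20 * (1000 * (∑ i : ZMod n, e0Z S i) + pz * (∑ i : ZMod n, e1Z S i))
      ≤ (20 * (n : ℤ) - 1) * 1000 * phiZ S

set_option maxRecDepth 40000 in
lemma driftZ_three : driftZstmt 3 699 ∧ driftZstmt 3 1000 := ⟨by decide, by decide⟩

set_option maxRecDepth 40000 in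
lemma driftZ_four : driftZstmt 4 699 ∧ driftZstmt 4 1000 := ⟨by decide, by decide⟩

set_option maxRecDepth 40000 in
lemma driftZ_five : driftZstmt 5 699 ∧ driftZstmt 5 1000 := ⟨by decide, by decide⟩

end ZLayer
section BLayer

variable {n : ℕ} [NeZero n]

lemma zadd_ne (hn : 6 ≤ n) (m : ZMod n) {a b : ℕ} (hab : a ≠ b)
    (hd : a < b → b - a < 6) (hd' : b < a → a - b < 6) :
    m + (a : ZMod n) ≠ m + (b : ZMod n) := by
  intro h
  have h2 : ((a : ℕ) : ZMod n) = ((b : ℕ) : ZMod n) := add_left_cancel h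
  rcases Nat.lt_or_ge a b with hlt | hge
  · have h0 : ((b - a : ℕ) : ZMod n) = 0 := by
      push_cast [Nat.cast_sub hlt.le]
      rw [← h2]; ring
    have hdvd := (ZMod.natCast_eq_zero_iff _ _).mp h0
    have := Nat.le_of_dvd (by omega) hdvd
    omega
  · have hlt : b < a := by omega
    have h0 : ((a - b : ℕ) : ZMod n) = 0 := by
      push_cast [Nat.cast_sub hlt.le]
      rw [h2]; ring
    have hdvd := (ZMod.natCast_eq_zero_iff _ _).mp h0
    have := Nat.le_of_dvd (by omega) hdvd
    omega

end BLayer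

section CLayer

variable {n : ℕ} [NeZero n] (hn : 6 ≤ n) (S : Config n) (m : ZMod n)

include hn

lemma winBase : winZ S (m+1)
    = wq (S (m+1)) (S (m+2)) (S (m+3)) (S (m+4)) (S (m+5)) := by
  have e2 : (m+1)+(1:ZMod n) = m+2 := by ring
  have e3 : (m+1)+(2:ZMod n) = m+3 := by ring
  have e4 : (m+1)+(3:ZMod n) = m+4 := by ring
  have e5 : (m+1)+(4:ZMod n) = m+5 := by ring
  rw [winZ, e2, e3, e4, e5]

lemma winUpd0 (v : Bool) : winZ (updC S (m) v) (m+1)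
    = wq v (S (m+2)) (S (m+3)) (S (m+4)) (S (m+5)) := by
  have e1_1 : (m+1)+(1:ZMod n) = m+2 := by ring
  have e1_2 : (m+1)+(2:ZMod n) = m+3 := by ring
  have e1_3 : (m+1)+(3:ZMod n) = m+4 := by ring
  have e1_4 : (m+1)+(4:ZMod n) = m+5 := by ring
  have ne2_1 : (m+2 : ZMod n) ≠ m+1 := by
    have := zadd_ne hn m (a := 2) (b := 1) (by omega) (by omega) (by omega); simpa using this
  have ne2_0 : (m+2 : ZMod n) ≠ m := by
    have := zadd_ne hn m (a := 2) (b := 0) (by omega) (by omega) (by omega); simpa using this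
  have ne3_1 : (m+3 : ZMod n) ≠ m+1 := by
    have := zadd_ne hn m (a := 3) (b := 1) (by omega) (by omega) (by omega); simpa using this
  have ne3_0 : (m+3 : ZMod n) ≠ m := by
    have := zadd_ne hn m (a := 3) (b := 0) (by omega) (by omega) (by omega); simpa using this
  have ne4_1 : (m+4 : ZMod n) ≠ m+1 := by
    have := zadd_ne hn m (a := 4) (b := 1) (by omega) (by omega) (by omega); simpa using this
  have ne4_0 : (m+4 : ZMod n) ≠ m := by
    have := zadd_ne hn m (a := 4) (b := 0) (by omega) (by omega) (by omega); simpa using this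
  have ne5_1 : (m+5 : ZMod n) ≠ m+1 := by
    have := zadd_ne hn m (a := 5) (b := 1) (by omega) (by omega) (by omega); simpa using this
  have ne5_0 : (m+5 : ZMod n) ≠ m := by
    have := zadd_ne hn m (a := 5) (b := 0) (by omega) (by omega) (by omega); simpa using this
  simp only [winZ, updC]
  rw [e1_1, e1_2, e1_3, e1_4]
  simp [Function.update_apply, ne2_1, ne2_0, ne3_1, ne3_0, ne4_1, ne4_0, ne5_1, ne5_0]

lemma winUpd1 (v : Bool) : winZ (updC S (m+1) v) (m+1)
    = wq v v (S (m+3)) (S (m+4)) (S (m+5)) := by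
  have e1_1 : (m+1)+(1:ZMod n) = m+2 := by ring
  have e1_2 : (m+1)+(2:ZMod n) = m+3 := by ring
  have e1_3 : (m+1)+(3:ZMod n) = m+4 := by ring
  have e1_4 : (m+1)+(4:ZMod n) = m+5 := by ring
  have ne1_2 : (m+1 : ZMod n) ≠ m+2 := by
    have := zadd_ne hn m (a := 1) (b := 2) (by omega) (by omega) (by omega); simpa using this
  have ne3_2 : (m+3 : ZMod n) ≠ m+2 := by
    have := zadd_ne hn m (a := 3) (b := 2) (by omega) (by omega) (by omega); simpa using this
  have ne3_1 : (m+3 : ZMod n) ≠ m+1 := by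
    have := zadd_ne hn m (a := 3) (b := 1) (by omega) (by omega) (by omega); simpa using this
  have ne4_2 : (m+4 : ZMod n) ≠ m+2 := by
    have := zadd_ne hn m (a := 4) (b := 2) (by omega) (by omega) (by omega); simpa using this
  have ne4_1 : (m+4 : ZMod n) ≠ m+1 := by
    have := zadd_ne hn m (a := 4) (b := 1) (by omega) (by omega) (by omega); simpa using this
  have ne5_2 : (m+5 : ZMod n) ≠ m+2 := by
    have := zadd_ne hn m (a := 5) (b := 2) (by omega) (by omega) (by omega); simpa using this
  have ne5_1 : (m+5 : ZMod n) ≠ m+1 := by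
    have := zadd_ne hn m (a := 5) (b := 1) (by omega) (by omega) (by omega); simpa using this
  simp only [winZ, updC]
  rw [e1_1, e1_2, e1_3, e1_4]
  simp [Function.update_apply, ne1_2, ne3_2, ne3_1, ne4_2, ne4_1, ne5_2, ne5_1]

lemma winUpd2 (v : Bool) : winZ (updC S (m+2) v) (m+1)
    = wq (S (m+1)) v v (S (m+4)) (S (m+5)) := by
  have e1_1 : (m+1)+(1:ZMod n) = m+2 := by ring
  have e1_2 : (m+1)+(2:ZMod n) = m+3 := by ring
  have e1_3 : (m+1)+(3:ZMod n) = m+4 := by ring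
  have e1_4 : (m+1)+(4:ZMod n) = m+5 := by ring
  have e2_1 : (m+2)+(1:ZMod n) = m+3 := by ring
  have ne1_3 : (m+1 : ZMod n) ≠ m+3 := by
    have := zadd_ne hn m (a := 1) (b := 3) (by omega) (by omega) (by omega); simpa using this
  have ne1_2 : (m+1 : ZMod n) ≠ m+2 := by
    have := zadd_ne hn m (a := 1) (b := 2) (by omega) (by omega) (by omega); simpa using this
  have ne2_3 : (m+2 : ZMod n) ≠ m+3 := by
    have := zadd_ne hn m (a := 2) (b := 3) (by omega) (by omega) (by omega); simpa using this
  have ne4_3 : (m+4 : ZMod n) ≠ m+3 := by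
    have := zadd_ne hn m (a := 4) (b := 3) (by omega) (by omega) (by omega); simpa using this
  have ne4_2 : (m+4 : ZMod n) ≠ m+2 := by
    have := zadd_ne hn m (a := 4) (b := 2) (by omega) (by omega) (by omega); simpa using this
  have ne5_3 : (m+5 : ZMod n) ≠ m+3 := by
    have := zadd_ne hn m (a := 5) (b := 3) (by omega) (by omega) (by omega); simpa using this
  have ne5_2 : (m+5 : ZMod n) ≠ m+2 := by
    have := zadd_ne hn m (a := 5) (b := 2) (by omega) (by omega) (by omega); simpa using this
  simp only [winZ, updC]
  rw [e1_1, e1_2, e1_3, e1_4, e2_1]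
  simp [Function.update_apply, ne1_3, ne1_2, ne2_3, ne4_3, ne4_2, ne5_3, ne5_2]

lemma winUpd3 (v : Bool) : winZ (updC S (m+3) v) (m+1)
    = wq (S (m+1)) (S (m+2)) v v (S (m+5)) := by
  have e1_1 : (m+1)+(1:ZMod n) = m+2 := by ring
  have e1_2 : (m+1)+(2:ZMod n) = m+3 := by ring
  have e1_3 : (m+1)+(3:ZMod n) = m+4 := by ring
  have e1_4 : (m+1)+(4:ZMod n) = m+5 := by ring
  have e3_1 : (m+3)+(1:ZMod n) = m+4 := by ring
  have ne1_4 : (m+1 : ZMod n) ≠ m+4 := by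
    have := zadd_ne hn m (a := 1) (b := 4) (by omega) (by omega) (by omega); simpa using this
  have ne1_3 : (m+1 : ZMod n) ≠ m+3 := by
    have := zadd_ne hn m (a := 1) (b := 3) (by omega) (by omega) (by omega); simpa using this
  have ne2_4 : (m+2 : ZMod n) ≠ m+4 := by
    have := zadd_ne hn m (a := 2) (b := 4) (by omega) (by omega) (by omega); simpa using this
  have ne2_3 : (m+2 : ZMod n) ≠ m+3 := by
    have := zadd_ne hn m (a := 2) (b := 3) (by omega) (by omega) (by omega); simpa using this
  have ne3_4 : (m+3 : ZMod n) ≠ m+4 := by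
    have := zadd_ne hn m (a := 3) (b := 4) (by omega) (by omega) (by omega); simpa using this
  have ne5_4 : (m+5 : ZMod n) ≠ m+4 := by
    have := zadd_ne hn m (a := 5) (b := 4) (by omega) (by omega) (by omega); simpa using this
  have ne5_3 : (m+5 : ZMod n) ≠ m+3 := by
    have := zadd_ne hn m (a := 5) (b := 3) (by omega) (by omega) (by omega); simpa using this
  simp only [winZ, updC]
  rw [e1_1, e1_2, e1_3, e1_4, e3_1]
  simp [Function.update_apply, ne1_4, ne1_3, ne2_4, ne2_3, ne3_4, ne5_4, ne5_3]

lemma winUpd4 (v : Bool) : winZ (updC S (m+4) v) (m+1)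
    = wq (S (m+1)) (S (m+2)) (S (m+3)) v v := by
  have e1_1 : (m+1)+(1:ZMod n) = m+2 := by ring
  have e1_2 : (m+1)+(2:ZMod n) = m+3 := by ring
  have e1_3 : (m+1)+(3:ZMod n) = m+4 := by ring
  have e1_4 : (m+1)+(4:ZMod n) = m+5 := by ring
  have e4_1 : (m+4)+(1:ZMod n) = m+5 := by ring
  have ne1_5 : (m+1 : ZMod n) ≠ m+5 := by
    have := zadd_ne hn m (a := 1) (b := 5) (by omega) (by omega) (by omega); simpa using this
  have ne1_4 : (m+1 : ZMod n) ≠ m+4 := by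
    have := zadd_ne hn m (a := 1) (b := 4) (by omega) (by omega) (by omega); simpa using this
  have ne2_5 : (m+2 : ZMod n) ≠ m+5 := by
    have := zadd_ne hn m (a := 2) (b := 5) (by omega) (by omega) (by omega); simpa using this
  have ne2_4 : (m+2 : ZMod n) ≠ m+4 := by
    have := zadd_ne hn m (a := 2) (b := 4) (by omega) (by omega) (by omega); simpa using this
  have ne3_5 : (m+3 : ZMod n) ≠ m+5 := by
    have := zadd_ne hn m (a := 3) (b := 5) (by omega) (by omega) (by omega); simpa using this
  have ne3_4 : (m+3 : ZMod n) ≠ m+4 := by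
    have := zadd_ne hn m (a := 3) (b := 4) (by omega) (by omega) (by omega); simpa using this
  have ne4_5 : (m+4 : ZMod n) ≠ m+5 := by
    have := zadd_ne hn m (a := 4) (b := 5) (by omega) (by omega) (by omega); simpa using this
  simp only [winZ, updC]
  rw [e1_1, e1_2, e1_3, e1_4, e4_1]
  simp [Function.update_apply, ne1_5, ne1_4, ne2_5, ne2_4, ne3_5, ne3_4, ne4_5]

lemma winUpd5 (v : Bool) : winZ (updC S (m+5) v) (m+1)
    = wq (S (m+1)) (S (m+2)) (S (m+3)) (S (m+4)) v := by
  have e1_1 : (m+1)+(1:ZMod n) = m+2 := by ring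
  have e1_2 : (m+1)+(2:ZMod n) = m+3 := by ring
  have e1_3 : (m+1)+(3:ZMod n) = m+4 := by ring
  have e1_4 : (m+1)+(4:ZMod n) = m+5 := by ring
  have e5_1 : (m+5)+(1:ZMod n) = m+6 := by ring
  have ne1_6 : (m+1 : ZMod n) ≠ m+6 := by
    have := zadd_ne hn m (a := 1) (b := 6) (by omega) (by omega) (by omega); simpa using this
  have ne1_5 : (m+1 : ZMod n) ≠ m+5 := by
    have := zadd_ne hn m (a := 1) (b := 5) (by omega) (by omega) (by omega); simpa using this
  have ne2_6 : (m+2 : ZMod n) ≠ m+6 := by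
    have := zadd_ne hn m (a := 2) (b := 6) (by omega) (by omega) (by omega); simpa using this
  have ne2_5 : (m+2 : ZMod n) ≠ m+5 := by
    have := zadd_ne hn m (a := 2) (b := 5) (by omega) (by omega) (by omega); simpa using this
  have ne3_6 : (m+3 : ZMod n) ≠ m+6 := by
    have := zadd_ne hn m (a := 3) (b := 6) (by omega) (by omega) (by omega); simpa using this
  have ne3_5 : (m+3 : ZMod n) ≠ m+5 := by
    have := zadd_ne hn m (a := 3) (b := 5) (by omega) (by omega) (by omega); simpa using this
  have ne4_6 : (m+4 : ZMod n) ≠ m+6 := by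
    have := zadd_ne hn m (a := 4) (b := 6) (by omega) (by omega) (by omega); simpa using this
  have ne4_5 : (m+4 : ZMod n) ≠ m+5 := by
    have := zadd_ne hn m (a := 4) (b := 5) (by omega) (by omega) (by omega); simpa using this
  have ne5_6 : (m+5 : ZMod n) ≠ m+6 := by
    have := zadd_ne hn m (a := 5) (b := 6) (by omega) (by omega) (by omega); simpa using this
  simp only [winZ, updC]
  rw [e1_1, e1_2, e1_3, e1_4, e5_1]
  simp [Function.update_apply, ne1_6, ne1_5, ne2_6, ne2_5, ne3_6, ne3_5, ne4_6, ne4_5, ne5_6]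

lemma cZ_vanish (pz : ℤ) (i : ZMod n) (h0 : i ≠ m) (h1 : i ≠ m+1) (h2 : i ≠ m+2)
    (h3 : i ≠ m+3) (h4 : i ≠ m+4) (h5 : i ≠ m+5) : cZ pz S i (m+1) = 0 := by
  have hv : ∀ v : Bool, winZ (updC S i v) (m+1) = winZ S (m+1) := by
    intro v
    have e1_1 : (m+1)+(1:ZMod n) = m+2 := by ring
    have e1_2 : (m+1)+(2:ZMod n) = m+3 := by ring
    have e1_3 : (m+1)+(3:ZMod n) = m+4 := by ring
    have e1_4 : (m+1)+(4:ZMod n) = m+5 := by ring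
    have g1 : (m+1 : ZMod n) ≠ i := h1.symm
    have f1 : (m+1 : ZMod n) ≠ i+1 := by
      intro h; exact h0 (by linear_combination -h)
    have g2 : (m+2 : ZMod n) ≠ i := h2.symm
    have f2 : (m+2 : ZMod n) ≠ i+1 := by
      intro h; exact h1 (by linear_combination -h)
    have g3 : (m+3 : ZMod n) ≠ i := h3.symm
    have f3 : (m+3 : ZMod n) ≠ i+1 := by
      intro h; exact h2 (by linear_combination -h)
    have g4 : (m+4 : ZMod n) ≠ i := h4.symm
    have f4 : (m+4 : ZMod n) ≠ i+1 := by
      intro h; exact h3 (by linear_combination -h)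
    have g5 : (m+5 : ZMod n) ≠ i := h5.symm
    have f5 : (m+5 : ZMod n) ≠ i+1 := by
      intro h; exact h4 (by linear_combination -h)
    simp only [winZ, updC]
    rw [e1_1, e1_2, e1_3, e1_4]
    simp [Function.update_apply, g1, g2, g3, g4, g5, f1, f2, f3, f4, f5]
  simp only [cZ, hv]
  split_ifs <;> ring

lemma bridge0 (pz : ℤ) : cZ pz S (m) (m+1)
    = 1000 * pe0 (S (m)) (S (m+1)) (wq (S (m+1)) (S (m+2)) (S (m+3)) (S (m+4)) (S (m+5))) (wq false (S (m+2)) (S (m+3)) (S (m+4)) (S (m+5)))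
      + pz * pe1 (S (m)) (S (m+1)) (wq (S (m+1)) (S (m+2)) (S (m+3)) (S (m+4)) (S (m+5))) (wq true (S (m+2)) (S (m+3)) (S (m+4)) (S (m+5))) := by
  have hB := winBase hn S m
  have hF := winUpd0 hn S m false
  have hT := winUpd0 hn S m true
  simp only [cZ]
  rw [hB, hF, hT]
  rcases hx : (S (m)) <;> rcases hy : (S (m+1)) <;> simp [pe0, pe1, hx, hy] <;> ring

lemma bridge1 (pz : ℤ) : cZ pz S (m+1) (m+1)
    = 1000 * pe0 (S (m+1)) (S (m+2)) (wq (S (m+1)) (S (m+2)) (S (m+3)) (S (m+4)) (S (m+5))) (wq false false (S (m+3)) (S (m+4)) (S (m+5)))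
      + pz * pe1 (S (m+1)) (S (m+2)) (wq (S (m+1)) (S (m+2)) (S (m+3)) (S (m+4)) (S (m+5))) (wq true true (S (m+3)) (S (m+4)) (S (m+5))) := by
  have eI : (m+1)+(1:ZMod n) = m+2 := by ring
  have hB := winBase hn S m
  have hF := winUpd1 hn S m false
  have hT := winUpd1 hn S m true
  simp only [cZ]
  rw [eI]
  rw [hB, hF, hT]
  rcases hx : (S (m+1)) <;> rcases hy : (S (m+2)) <;> simp [pe0, pe1, hx, hy] <;> ring

lemma bridge2 (pz : ℤ) : cZ pz S (m+2) (m+1)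
    = 1000 * pe0 (S (m+2)) (S (m+3)) (wq (S (m+1)) (S (m+2)) (S (m+3)) (S (m+4)) (S (m+5))) (wq (S (m+1)) false false (S (m+4)) (S (m+5)))
      + pz * pe1 (S (m+2)) (S (m+3)) (wq (S (m+1)) (S (m+2)) (S (m+3)) (S (m+4)) (S (m+5))) (wq (S (m+1)) true true (S (m+4)) (S (m+5))) := by
  have eI : (m+2)+(1:ZMod n) = m+3 := by ring
  have hB := winBase hn S m
  have hF := winUpd2 hn S m false
  have hT := winUpd2 hn S m true
  simp only [cZ]
  rw [eI]
  rw [hB, hF, hT]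
  rcases hx : (S (m+2)) <;> rcases hy : (S (m+3)) <;> simp [pe0, pe1, hx, hy] <;> ring

lemma bridge3 (pz : ℤ) : cZ pz S (m+3) (m+1)
    = 1000 * pe0 (S (m+3)) (S (m+4)) (wq (S (m+1)) (S (m+2)) (S (m+3)) (S (m+4)) (S (m+5))) (wq (S (m+1)) (S (m+2)) false false (S (m+5)))
      + pz * pe1 (S (m+3)) (S (m+4)) (wq (S (m+1)) (S (m+2)) (S (m+3)) (S (m+4)) (S (m+5))) (wq (S (m+1)) (S (m+2)) true true (S (m+5))) := by
  have eI : (m+3)+(1:ZMod n) = m+4 := by ring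
  have hB := winBase hn S m
  have hF := winUpd3 hn S m false
  have hT := winUpd3 hn S m true
  simp only [cZ]
  rw [eI]
  rw [hB, hF, hT]
  rcases hx : (S (m+3)) <;> rcases hy : (S (m+4)) <;> simp [pe0, pe1, hx, hy] <;> ring

lemma bridge4 (pz : ℤ) : cZ pz S (m+4) (m+1)
    = 1000 * pe0 (S (m+4)) (S (m+5)) (wq (S (m+1)) (S (m+2)) (S (m+3)) (S (m+4)) (S (m+5))) (wq (S (m+1)) (S (m+2)) (S (m+3)) false false)
      + pz * pe1 (S (m+4)) (S (m+5)) (wq (S (m+1)) (S (m+2)) (S (m+3)) (S (m+4)) (S (m+5))) (wq (S (m+1)) (S (m+2)) (S (m+3)) true true) := by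
  have eI : (m+4)+(1:ZMod n) = m+5 := by ring
  have hB := winBase hn S m
  have hF := winUpd4 hn S m false
  have hT := winUpd4 hn S m true
  simp only [cZ]
  rw [eI]
  rw [hB, hF, hT]
  rcases hx : (S (m+4)) <;> rcases hy : (S (m+5)) <;> simp [pe0, pe1, hx, hy] <;> ring

lemma bridge5 (pz : ℤ) : cZ pz S (m+5) (m+1)
    = 1000 * pe0 (S (m+5)) (S (m+6)) (wq (S (m+1)) (S (m+2)) (S (m+3)) (S (m+4)) (S (m+5))) (wq (S (m+1)) (S (m+2)) (S (m+3)) (S (m+4)) false)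
      + pz * pe1 (S (m+5)) (S (m+6)) (wq (S (m+1)) (S (m+2)) (S (m+3)) (S (m+4)) (S (m+5))) (wq (S (m+1)) (S (m+2)) (S (m+3)) (S (m+4)) true) := by
  have eI : (m+5)+(1:ZMod n) = m+6 := by ring
  have hB := winBase hn S m
  have hF := winUpd5 hn S m false
  have hT := winUpd5 hn S m true
  simp only [cZ]
  rw [eI]
  rw [hB, hF, hT]
  rcases hx : (S (m+5)) <;> rcases hy : (S (m+6)) <;> simp [pe0, pe1, hx, hy] <;> ring

lemma sum_tset_eq (pz : ℤ) : ∑ i : ZMod n, cZ pz S i (m+1)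
    = certZ pz (S m) (S (m+1)) (S (m+2)) (S (m+3)) (S (m+4)) (S (m+5)) (S (m+6))
      - 50 * wq (S (m+1)) (S (m+2)) (S (m+3)) (S (m+4)) (S (m+5))
      - 1000 * (rq (S m) (S (m+1)) (S (m+2)) (S (m+3)) (S (m+4)) (S (m+5))
              - rq (S (m+1)) (S (m+2)) (S (m+3)) (S (m+4)) (S (m+5)) (S (m+6))) := by
  have d0_1 : (m : ZMod n) ≠ m+1 := by
    have := zadd_ne hn m (a := 0) (b := 1) (by omega) (by omega) (by omega); simpa using this
  have d0_2 : (m : ZMod n) ≠ m+2 := by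
    have := zadd_ne hn m (a := 0) (b := 2) (by omega) (by omega) (by omega); simpa using this
  have d0_3 : (m : ZMod n) ≠ m+3 := by
    have := zadd_ne hn m (a := 0) (b := 3) (by omega) (by omega) (by omega); simpa using this
  have d0_4 : (m : ZMod n) ≠ m+4 := by
    have := zadd_ne hn m (a := 0) (b := 4) (by omega) (by omega) (by omega); simpa using this
  have d0_5 : (m : ZMod n) ≠ m+5 := by
    have := zadd_ne hn m (a := 0) (b := 5) (by omega) (by omega) (by omega); simpa using this
  have d1_0 : (m+1 : ZMod n) ≠ m := by
    have := zadd_ne hn m (a := 1) (b := 0) (by omega) (by omega) (by omega); simpa using this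
  have d1_2 : (m+1 : ZMod n) ≠ m+2 := by
    have := zadd_ne hn m (a := 1) (b := 2) (by omega) (by omega) (by omega); simpa using this
  have d1_3 : (m+1 : ZMod n) ≠ m+3 := by
    have := zadd_ne hn m (a := 1) (b := 3) (by omega) (by omega) (by omega); simpa using this
  have d1_4 : (m+1 : ZMod n) ≠ m+4 := by
    have := zadd_ne hn m (a := 1) (b := 4) (by omega) (by omega) (by omega); simpa using this
  have d1_5 : (m+1 : ZMod n) ≠ m+5 := by
    have := zadd_ne hn m (a := 1) (b := 5) (by omega) (by omega) (by omega); simpa using this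
  have d2_0 : (m+2 : ZMod n) ≠ m := by
    have := zadd_ne hn m (a := 2) (b := 0) (by omega) (by omega) (by omega); simpa using this
  have d2_1 : (m+2 : ZMod n) ≠ m+1 := by
    have := zadd_ne hn m (a := 2) (b := 1) (by omega) (by omega) (by omega); simpa using this
  have d2_3 : (m+2 : ZMod n) ≠ m+3 := by
    have := zadd_ne hn m (a := 2) (b := 3) (by omega) (by omega) (by omega); simpa using this
  have d2_4 : (m+2 : ZMod n) ≠ m+4 := by
    have := zadd_ne hn m (a := 2) (b := 4) (by omega) (by omega) (by omega); simpa using this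
  have d2_5 : (m+2 : ZMod n) ≠ m+5 := by
    have := zadd_ne hn m (a := 2) (b := 5) (by omega) (by omega) (by omega); simpa using this
  have d3_0 : (m+3 : ZMod n) ≠ m := by
    have := zadd_ne hn m (a := 3) (b := 0) (by omega) (by omega) (by omega); simpa using this
  have d3_1 : (m+3 : ZMod n) ≠ m+1 := by
    have := zadd_ne hn m (a := 3) (b := 1) (by omega) (by omega) (by omega); simpa using this
  have d3_2 : (m+3 : ZMod n) ≠ m+2 := by
    have := zadd_ne hn m (a := 3) (b := 2) (by omega) (by omega) (by omega); simpa using this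
  have d3_4 : (m+3 : ZMod n) ≠ m+4 := by
    have := zadd_ne hn m (a := 3) (b := 4) (by omega) (by omega) (by omega); simpa using this
  have d3_5 : (m+3 : ZMod n) ≠ m+5 := by
    have := zadd_ne hn m (a := 3) (b := 5) (by omega) (by omega) (by omega); simpa using this
  have d4_0 : (m+4 : ZMod n) ≠ m := by
    have := zadd_ne hn m (a := 4) (b := 0) (by omega) (by omega) (by omega); simpa using this
  have d4_1 : (m+4 : ZMod n) ≠ m+1 := by
    have := zadd_ne hn m (a := 4) (b := 1) (by omega) (by omega) (by omega); simpa using this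
  have d4_2 : (m+4 : ZMod n) ≠ m+2 := by
    have := zadd_ne hn m (a := 4) (b := 2) (by omega) (by omega) (by omega); simpa using this
  have d4_3 : (m+4 : ZMod n) ≠ m+3 := by
    have := zadd_ne hn m (a := 4) (b := 3) (by omega) (by omega) (by omega); simpa using this
  have d4_5 : (m+4 : ZMod n) ≠ m+5 := by
    have := zadd_ne hn m (a := 4) (b := 5) (by omega) (by omega) (by omega); simpa using this
  have d5_0 : (m+5 : ZMod n) ≠ m := by
    have := zadd_ne hn m (a := 5) (b := 0) (by omega) (by omega) (by omega); simpa using this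
  have d5_1 : (m+5 : ZMod n) ≠ m+1 := by
    have := zadd_ne hn m (a := 5) (b := 1) (by omega) (by omega) (by omega); simpa using this
  have d5_2 : (m+5 : ZMod n) ≠ m+2 := by
    have := zadd_ne hn m (a := 5) (b := 2) (by omega) (by omega) (by omega); simpa using this
  have d5_3 : (m+5 : ZMod n) ≠ m+3 := by
    have := zadd_ne hn m (a := 5) (b := 3) (by omega) (by omega) (by omega); simpa using this
  have d5_4 : (m+5 : ZMod n) ≠ m+4 := by
    have := zadd_ne hn m (a := 5) (b := 4) (by omega) (by omega) (by omega); simpa using this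
  have hsub : ∑ i : ZMod n, cZ pz S i (m+1)
      = ∑ i ∈ ({m, m+1, m+2, m+3, m+4, m+5} : Finset (ZMod n)), cZ pz S i (m+1) := by
    refine (Finset.sum_subset (Finset.subset_univ _) ?_).symm
    intro i _ hi
    simp only [Finset.mem_insert, Finset.mem_singleton] at hi
    push_neg at hi
    exact cZ_vanish hn S m pz i hi.1 hi.2.1 hi.2.2.1 hi.2.2.2.1 hi.2.2.2.2.1 hi.2.2.2.2.2
  rw [hsub]
  rw [Finset.sum_insert (by simp [d0_1, d0_2, d0_3, d0_4, d0_5])]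
  rw [Finset.sum_insert (by simp [d1_2, d1_3, d1_4, d1_5])]
  rw [Finset.sum_insert (by simp [d2_3, d2_4, d2_5])]
  rw [Finset.sum_insert (by simp [d3_4, d3_5])]
  rw [Finset.sum_insert (by simp [d4_5])]
  rw [Finset.sum_singleton]
  rw [bridge0 hn S m pz, bridge1 hn S m pz, bridge2 hn S m pz, bridge3 hn S m pz,
      bridge4 hn S m pz, bridge5 hn S m pz]
  simp only [certZ]
  ring

end CLayer

section DLayer

variable {n : ℕ} [NeZero n]

lemma reidx (G : ZMod n → ℤ) : ∑ j : ZMod n, G j = ∑ m : ZMod n, G (m + 1) :=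
  (Fintype.sum_equiv (Equiv.addRight (1 : ZMod n)) (fun m => G (m + 1)) G (fun _ => rfl)).symm

lemma driftZ_ge6 (hn : 6 ≤ n) (pz : ℤ)
    (hcert : ∀ a0 a1 a2 a3 a4 a5 a6 : Bool, certZ pz a0 a1 a2 a3 a4 a5 a6 ≤ 0) :
    driftZstmt n pz := by
  intro S
  have hsplit : ∀ i : ZMod n, ∑ j : ZMod n, cZ pz S i j
      = 1000 * ((if S i = S (i+1) then phiZ S else phiZ (updC S i false)) - phiZ S)
        + pz * (if S i = false ∧ S (i+1) = false then phiZ (updC S i true) - phiZ S else 0) := by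
    intro i
    by_cases h1 : S i = S (i+1)
    · by_cases h2 : S i = false ∧ S (i+1) = false
      · simp only [cZ, if_pos h1, if_pos h2, phiZ, Finset.sum_add_distrib, ← Finset.mul_sum,
          Finset.sum_sub_distrib]
      · simp only [cZ, if_pos h1, if_neg h2, phiZ, Finset.sum_add_distrib, ← Finset.mul_sum,
          Finset.sum_sub_distrib, Finset.sum_const_zero]
    · by_cases h2 : S i = false ∧ S (i+1) = false
      · simp only [cZ, if_neg h1, if_pos h2, phiZ, Finset.sum_add_distrib, ← Finset.mul_sum,
          Finset.sum_sub_distrib]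
      · simp only [cZ, if_neg h1, if_neg h2, phiZ, Finset.sum_add_distrib, ← Finset.mul_sum,
          Finset.sum_sub_distrib, Finset.sum_const_zero]
  have per_i : ∀ i : ZMod n, 1000 * e0Z S i + pz * e1Z S i
      = 1000 * phiZ S + ∑ j : ZMod n, cZ pz S i j := by
    intro i
    rw [hsplit i, e0Z, e1Z]
    ring
  have hsum : ∑ i : ZMod n, (1000 * e0Z S i + pz * e1Z S i)
      = 1000 * (n : ℤ) * phiZ S + ∑ j : ZMod n, ∑ i : ZMod n, cZ pz S i j := by
    rw [Finset.sum_congr rfl (fun i _ => per_i i), Finset.sum_add_distrib,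
      Finset.sum_const, Finset.card_univ, ZMod.card, Finset.sum_comm]
    ring
  -- bound the double sum
  have hbound : ∑ j : ZMod n, ∑ i : ZMod n, cZ pz S i j ≤ -(50 * phiZ S) := by
    rw [reidx (fun j => ∑ i : ZMod n, cZ pz S i j)]
    have heq : ∀ m : ZMod n, ∑ i : ZMod n, cZ pz S i (m + 1)
        = certZ pz (S m) (S (m+1)) (S (m+2)) (S (m+3)) (S (m+4)) (S (m+5)) (S (m+6))
          - 50 * winZ S (m+1)
          - 1000 * ((fun x => rq (S x) (S (x+1)) (S (x+2)) (S (x+3)) (S (x+4)) (S (x+5))) m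
                  - (fun x => rq (S x) (S (x+1)) (S (x+2)) (S (x+3)) (S (x+4)) (S (x+5))) (m+1)) := by
      intro m
      have e2 : (m+1)+(1:ZMod n) = m+2 := by ring
      have e3 : (m+1)+(2:ZMod n) = m+3 := by ring
      have e4 : (m+1)+(3:ZMod n) = m+4 := by ring
      have e5 : (m+1)+(4:ZMod n) = m+5 := by ring
      have e6 : (m+1)+(5:ZMod n) = m+6 := by ring
      rw [sum_tset_eq hn S m pz, winBase hn S m]
      simp only [e2, e3, e4, e5, e6]
    rw [Finset.sum_congr rfl (fun m _ => heq m)]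
    have hR : ∑ m : ZMod n,
        ((fun x => rq (S x) (S (x+1)) (S (x+2)) (S (x+3)) (S (x+4)) (S (x+5))) m
        - (fun x => rq (S x) (S (x+1)) (S (x+2)) (S (x+3)) (S (x+4)) (S (x+5))) (m+1)) = 0 := by
      rw [Finset.sum_sub_distrib,
        reidx (fun x => rq (S x) (S (x+1)) (S (x+2)) (S (x+3)) (S (x+4)) (S (x+5)))]
      ring
    have hW : ∑ m : ZMod n, winZ S (m + 1) = phiZ S := by
      rw [phiZ, reidx (winZ S)]
    have hC : ∑ m : ZMod n,
        certZ pz (S m) (S (m+1)) (S (m+2)) (S (m+3)) (S (m+4)) (S (m+5)) (S (m+6)) ≤ 0 :=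
      Finset.sum_nonpos (fun m _ => hcert _ _ _ _ _ _ _)
    calc ∑ m : ZMod n, (certZ pz (S m) (S (m+1)) (S (m+2)) (S (m+3)) (S (m+4)) (S (m+5)) (S (m+6))
            - 50 * winZ S (m+1)
            - 1000 * ((fun x => rq (S x) (S (x+1)) (S (x+2)) (S (x+3)) (S (x+4)) (S (x+5))) m
                  - (fun x => rq (S x) (S (x+1)) (S (x+2)) (S (x+3)) (S (x+4)) (S (x+5))) (m+1)))
        = (∑ m : ZMod n, certZ pz (S m) (S (m+1)) (S (m+2)) (S (m+3)) (S (m+4)) (S (m+5)) (S (m+6)))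
          - 50 * (∑ m : ZMod n, winZ S (m+1))
          - 1000 * (∑ m : ZMod n,
              ((fun x => rq (S x) (S (x+1)) (S (x+2)) (S (x+3)) (S (x+4)) (S (x+5))) m
              - (fun x => rq (S x) (S (x+1)) (S (x+2)) (S (x+3)) (S (x+4)) (S (x+5))) (m+1))) := by
          rw [Finset.sum_sub_distrib, Finset.sum_sub_distrib, ← Finset.mul_sum, ← Finset.mul_sum]
      _ ≤ -(50 * phiZ S) := by rw [hR, hW]; linarith
  have hfin : 1000 * (∑ i : ZMod n, e0Z S i) + pz * (∑ i : ZMod n, e1Z S i)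
      = ∑ i : ZMod n, (1000 * e0Z S i + pz * e1Z S i) := by
    rw [Finset.sum_add_distrib, ← Finset.mul_sum, ← Finset.mul_sum]
  rw [hfin]
  have hphip : (0:ℤ) ≤ phiZ S := Finset.sum_nonneg (fun j _ => wq_nonneg _ _ _ _ _)
  nlinarith [hsum, hbound]

lemma driftZ_all (hn : 3 ≤ n) (pz : ℤ) (hpz : pz = 699 ∨ pz = 1000) :
    driftZstmt n pz := by
  by_cases h6 : 6 ≤ n
  · refine driftZ_ge6 h6 pz ?_
    rcases hpz with rfl | rfl
    · exact fun a0 a1 a2 a3 a4 a5 a6 => (certZ_nonpos a0 a1 a2 a3 a4 a5 a6).1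
    · exact fun a0 a1 a2 a3 a4 a5 a6 => (certZ_nonpos a0 a1 a2 a3 a4 a5 a6).2
  · interval_cases n
    · rcases hpz with rfl | rfl
      · exact driftZ_three.1
      · exact driftZ_three.2
    · rcases hpz with rfl | rfl
      · exact driftZ_four.1
      · exact driftZ_four.2
    · rcases hpz with rfl | rfl
      · exact driftZ_five.1
      · exact driftZ_five.2

end DLayer

section RealLayer

variable {n : ℕ} [NeZero n]

noncomputable def phiR (S : Config n) : ℝ := ((phiZ S : ℤ) : ℝ)

lemma phiZ_nonneg (S : Config n) : (0:ℤ) ≤ phiZ S :=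
  Finset.sum_nonneg (fun j _ => wq_nonneg _ _ _ _ _)

lemma phiR_nonneg (S : Config n) : (0:ℝ) ≤ phiR S := by
  unfold phiR; exact_mod_cast phiZ_nonneg S

lemma phiR_le (S : Config n) : phiR S ≤ 3039 * (n:ℝ) := by
  have h : phiZ S ≤ 3039 * (n:ℤ) := by
    calc phiZ S ≤ ∑ _j : ZMod n, (3039:ℤ) :=
          Finset.sum_le_sum (fun j _ => wq_le _ _ _ _ _)
      _ = 3039 * (n:ℤ) := by
          rw [Finset.sum_const, Finset.card_univ, ZMod.card]; ring
  unfold phiR; exact_mod_cast h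

lemma phiR_ge_one {S : Config n} (h : S ≠ fun _ => true) : 1 ≤ phiR S := by
  have h2 : ¬∀ x, S x = true := fun h' => h (funext h')
  push_neg at h2
  obtain ⟨j, hj⟩ := h2
  have hj : S j = false := by
    rcases hSj : S j with _ | _
    · rfl
    · exact absurd hSj hj
  have h3 : (1:ℤ) ≤ winZ S j := by
    rw [winZ, hj]; exact wq_ge_one _ _ _ _
  have h4 : winZ S j ≤ phiZ S := by
    refine Finset.single_le_sum (f := winZ S) (fun i _ => wq_nonneg _ _ _ _ _)
      (Finset.mem_univ j)
  have : (1:ℤ) ≤ phiZ S := le_trans h3 h4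
  unfold phiR; exact_mod_cast this

lemma updsum (p : ℝ) (S : Config n) (i : ZMod n) (f : Config n → ℝ) :
    ∑ T : Config n, srpUpdProb p S i T * f T
      = if S i = true ∧ S (i+1) = true then f S
        else if S i = false ∧ S (i+1) = false then p * f (updC S i true) + (1-p) * f S
        else f (updC S i false) := by
  by_cases h1 : S i = true ∧ S (i+1) = true
  · simp only [srpUpdProb, if_pos h1, ite_mul, one_mul, zero_mul,
      Finset.sum_ite_eq', Finset.mem_univ, if_true]
  · by_cases h2 : S i = false ∧ S (i+1) = false
    · simp only [srpUpdProb, if_neg h1, if_pos h2, add_mul, Finset.sum_add_distrib,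
        ite_mul, zero_mul, Finset.sum_ite_eq', Finset.mem_univ, if_true, updC]
      try ring
    · simp only [srpUpdProb, if_neg h1, if_neg h2, ite_mul, one_mul, zero_mul,
        Finset.sum_ite_eq', Finset.mem_univ, if_true, updC]

lemma updsum_cast (p : ℝ) (S : Config n) (i : ZMod n) :
    ∑ T : Config n, srpUpdProb p S i T * phiR T
      = ((e0Z S i : ℤ) : ℝ) + p * ((e1Z S i : ℤ) : ℝ) := by
  rw [updsum]
  rcases hx : S i <;> rcases hy : S (i+1) <;>
    simp only [e0Z, e1Z, hx, hy, phiR, Bool.false_eq_true, Bool.true_eq_false, and_self,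
      and_false, false_and, if_true, if_false, if_pos, if_neg, not_false_iff, ite_true,
      ite_false, eq_self_iff_true] <;>
    push_cast <;> ring

lemma stepsum (p : ℝ) (S : Config n) (f : Config n → ℝ) :
    ∑ T : Config n, srpStepProb p S T * f T
      = (1/(n:ℝ)) * ∑ i : ZMod n, (∑ T : Config n, srpUpdProb p S i T * f T) := by
  simp only [srpStepProb, mul_assoc]
  rw [← Finset.mul_sum]
  congr 1
  calc ∑ T : Config n, (∑ i : ZMod n, srpUpdProb p S i T) * f T
      = ∑ T : Config n, ∑ i : ZMod n, srpUpdProb p S i T * f T := by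
        apply Finset.sum_congr rfl; intro T _; rw [Finset.sum_mul]
    _ = ∑ i : ZMod n, ∑ T : Config n, srpUpdProb p S i T * f T := Finset.sum_comm

lemma drift_real (hn : 3 ≤ n) {p : ℝ} (hp : 699/1000 ≤ p) (hp1 : p ≤ 1) (S : Config n) :
    ∑ T : Config n, srpStepProb p S T * phiR T ≤ (1 - 1/(20*(n:ℝ))) * phiR S := by
  have hn0 : (0:ℝ) < (n:ℝ) := by
    have : 0 < n := by omega
    exact_mod_cast this
  rw [stepsum, Finset.sum_congr rfl (fun i _ => updsum_cast p S i)]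
  have hA : ∑ i : ZMod n, (((e0Z S i : ℤ):ℝ) + p * ((e1Z S i : ℤ):ℝ))
      = (((∑ i : ZMod n, e0Z S i : ℤ)):ℝ) + p * (((∑ i : ZMod n, e1Z S i : ℤ)):ℝ) := by
    rw [Finset.sum_add_distrib, ← Finset.mul_sum]
    push_cast
    ring
  rw [hA]
  set A : ℤ := ∑ i : ZMod n, e0Z S i with hAdef
  set B : ℤ := ∑ i : ZMod n, e1Z S i with hBdef
  have h699 := driftZ_all hn 699 (Or.inl rfl) S
  have h1000 := driftZ_all hn 1000 (Or.inr rfl) S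
  have hc699 : (20:ℝ) * (1000 * (A:ℝ) + 699 * (B:ℝ)) ≤ (20*(n:ℝ) - 1) * 1000 * phiR S := by
    unfold phiR; exact_mod_cast h699
  have hc1000 : (20:ℝ) * (1000 * (A:ℝ) + 1000 * (B:ℝ)) ≤ (20*(n:ℝ) - 1) * 1000 * phiR S := by
    unfold phiR; exact_mod_cast h1000
  have key : (A:ℝ) + p * (B:ℝ) ≤ ((n:ℝ) - 1/20) * phiR S := by
    rcases le_or_gt 0 (B:ℝ) with hB | hB
    · nlinarith [mul_le_mul_of_nonneg_right hp1 hB]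
    · nlinarith [mul_le_mul_of_nonneg_left hp (le_of_lt (neg_pos.mpr hB))]
  have hfin : (1/(n:ℝ)) * (((n:ℝ) - 1/20) * phiR S) = (1 - 1/(20*(n:ℝ))) * phiR S := by
    field_simp
  calc (1/(n:ℝ)) * ((A:ℝ) + p * (B:ℝ))
      ≤ (1/(n:ℝ)) * (((n:ℝ) - 1/20) * phiR S) := by
        apply mul_le_mul_of_nonneg_left key
        positivity
    _ = (1 - 1/(20*(n:ℝ))) * phiR S := hfin

end RealLayer

section Traj

variable {n : ℕ} [NeZero n]

lemma srpUpdProb_nonneg {p : ℝ} (hp0 : 0 ≤ p) (hp1 : p ≤ 1) (S : Config n) (i : ZMod n)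
    (T : Config n) : 0 ≤ srpUpdProb p S i T := by
  unfold srpUpdProb
  split_ifs <;> first
    | linarith
    | (apply add_nonneg <;> split_ifs <;> linarith)

lemma srpStepProb_nonneg {p : ℝ} (hp0 : 0 ≤ p) (hp1 : p ≤ 1) (S T : Config n) :
    0 ≤ srpStepProb p S T := by
  unfold srpStepProb
  apply mul_nonneg
  · positivity
  · exact Finset.sum_nonneg fun i _ => srpUpdProb_nonneg hp0 hp1 S i T

noncomputable def wt (p : ℝ) (S0 : Config n) {t : ℕ} (σ : Fin (t+1) → Config n) : ℝ :=
  if σ 0 = S0 then ∏ s : Fin t, srpStepProb p (σ s.castSucc) (σ s.succ) else 0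

lemma wt_nonneg {p : ℝ} (hp0 : 0 ≤ p) (hp1 : p ≤ 1) (S0 : Config n) {t : ℕ}
    (σ : Fin (t+1) → Config n) : 0 ≤ wt p S0 σ := by
  unfold wt
  split_ifs
  · exact Finset.prod_nonneg fun s _ => srpStepProb_nonneg hp0 hp1 _ _
  · exact le_refl 0

noncomputable def Mval (p : ℝ) (S0 : Config n) (t : ℕ) (f : Config n → ℝ) : ℝ :=
  ∑ σ : Fin (t+1) → Config n, wt p S0 σ * f (σ (Fin.last t))

lemma Mval_zero (p : ℝ) (S0 : Config n) (f : Config n → ℝ) : Mval p S0 0 f = f S0 := by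
  unfold Mval wt
  rw [← Equiv.sum_comp (Equiv.funUnique (Fin 1) (Config n)).symm]
  have : ∀ x : Config n,
      (if (Equiv.funUnique (Fin 1) (Config n)).symm x 0 = S0 then
        ∏ s : Fin 0, srpStepProb p ((Equiv.funUnique (Fin 1) (Config n)).symm x s.castSucc)
          ((Equiv.funUnique (Fin 1) (Config n)).symm x s.succ) else 0)
        * f ((Equiv.funUnique (Fin 1) (Config n)).symm x (Fin.last 0))
      = (if x = S0 then 1 else 0) * f x := by
    intro x
    simp [Equiv.funUnique]
  rw [Finset.sum_congr rfl (fun x _ => this x)]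
  simp [ite_mul, Finset.sum_ite_eq']

def snocEquiv (t : ℕ) : ((Fin (t+1) → Config n) × Config n) ≃ (Fin (t+2) → Config n) where
  toFun := fun στ => Fin.snoc στ.1 στ.2
  invFun := fun τ => (Fin.init τ, τ (Fin.last (t+1)))
  left_inv := fun στ => by simp
  right_inv := fun τ => by simp

lemma Mval_succ (p : ℝ) (S0 : Config n) (t : ℕ) (f : Config n → ℝ) :
    Mval p S0 (t+1) f = Mval p S0 t (fun x => ∑ T : Config n, srpStepProb p x T * f T) := by
  unfold Mval
  rw [← Equiv.sum_comp (snocEquiv (n := n) t), Fintype.sum_prod_type]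
  simp only [snocEquiv, Equiv.coe_fn_mk]
  apply Finset.sum_congr rfl
  intro σ _
  have hterm : ∀ T : Config n,
      wt p S0 (Fin.snoc σ T) * f ((Fin.snoc σ T : Fin (t+2) → Config n) (Fin.last (t+1)))
        = wt p S0 σ * (srpStepProb p (σ (Fin.last t)) T * f T) := by
    intro T
    unfold wt
    have h0 : (Fin.snoc σ T : Fin (t+2) → Config n) 0 = σ 0 := by
      rw [show (0 : Fin (t+2)) = Fin.castSucc 0 from rfl, Fin.snoc_castSucc]
    have hlastf : (Fin.snoc σ T : Fin (t+2) → Config n) (Fin.last (t+1)) = T :=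
      Fin.snoc_last _ _
    rw [h0, hlastf]
    have hsplit : (∏ s : Fin (t+1), srpStepProb p
          ((Fin.snoc σ T : Fin (t+2) → Config n) s.castSucc)
          ((Fin.snoc σ T : Fin (t+2) → Config n) s.succ))
        = (∏ s : Fin t, srpStepProb p (σ s.castSucc) (σ s.succ))
          * srpStepProb p (σ (Fin.last t)) T := by
      rw [Fin.prod_univ_castSucc]
      have hA : (∏ s : Fin t, srpStepProb p
            ((Fin.snoc σ T : Fin (t+2) → Config n) (s.castSucc.castSucc))
            ((Fin.snoc σ T : Fin (t+2) → Config n) (s.castSucc.succ)))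
          = ∏ s : Fin t, srpStepProb p (σ s.castSucc) (σ s.succ) := by
        apply Finset.prod_congr rfl
        intro s _
        rw [Fin.succ_castSucc, Fin.snoc_castSucc, Fin.snoc_castSucc]
      have hB : (Fin.snoc σ T : Fin (t+2) → Config n) ((Fin.last t).castSucc) = σ (Fin.last t) :=
        Fin.snoc_castSucc _ _ _
      have hC : (Fin.snoc σ T : Fin (t+2) → Config n) ((Fin.last t).succ) = T := by
        rw [Fin.succ_last]; exact Fin.snoc_last _ _
      rw [hA, hB, hC]
    rw [hsplit]
    split_ifs
    · ring
    · ring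
  rw [Finset.sum_congr rfl (fun T _ => hterm T), ← Finset.mul_sum]

lemma Mval_mono {p : ℝ} (hp0 : 0 ≤ p) (hp1 : p ≤ 1) (S0 : Config n) (t : ℕ)
    {f g : Config n → ℝ} (h : ∀ x, f x ≤ g x) : Mval p S0 t f ≤ Mval p S0 t g := by
  apply Finset.sum_le_sum
  intro σ _
  exact mul_le_mul_of_nonneg_left (h _) (wt_nonneg hp0 hp1 S0 σ)

lemma Mval_smul (p : ℝ) (S0 : Config n) (t : ℕ) (c : ℝ) (f : Config n → ℝ) :
    Mval p S0 t (fun x => c * f x) = c * Mval p S0 t f := by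
  unfold Mval
  rw [Finset.mul_sum]
  apply Finset.sum_congr rfl
  intro σ _
  ring

lemma Mval_phi_le (hn : 3 ≤ n) {p : ℝ} (hp : 699/1000 ≤ p) (hp1 : p ≤ 1) (S0 : Config n) :
    ∀ t : ℕ, Mval p S0 t phiR ≤ (1 - 1/(20*(n:ℝ)))^t * phiR S0 := by
  have hp0 : (0:ℝ) ≤ p := by linarith
  have hn0 : (0:ℝ) < (n:ℝ) := by exact_mod_cast (by omega : 0 < n)
  have hn3 : (3:ℝ) ≤ (n:ℝ) := by exact_mod_cast hn
  have hq0 : (0:ℝ) ≤ 1 - 1/(20*(n:ℝ)) := by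
    have h1 : 1/(20*(n:ℝ)) ≤ 1/20 := by
      rw [div_le_div_iff₀ (by positivity) (by norm_num)]
      nlinarith
    linarith
  intro t
  induction t with
  | zero => rw [Mval_zero]; simp
  | succ t ih =>
      rw [Mval_succ]
      calc Mval p S0 t (fun x => ∑ T : Config n, srpStepProb p x T * phiR T)
          ≤ Mval p S0 t (fun x => (1 - 1/(20*(n:ℝ))) * phiR x) :=
            Mval_mono hp0 hp1 S0 t (fun x => drift_real hn hp hp1 x)
        _ = (1 - 1/(20*(n:ℝ))) * Mval p S0 t phiR := Mval_smul _ _ _ _ _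
        _ ≤ (1 - 1/(20*(n:ℝ))) * ((1 - 1/(20*(n:ℝ)))^t * phiR S0) :=
            mul_le_mul_of_nonneg_left ih hq0
        _ = (1 - 1/(20*(n:ℝ)))^(t+1) * phiR S0 := by ring

lemma traj_le_Mval {p : ℝ} (hp0 : 0 ≤ p) (hp1 : p ≤ 1) (S0 : Config n) (t : ℕ) :
    srpTrajProb p S0 t (fun σ => σ (Fin.last t) ≠ fun _ => true) ≤ Mval p S0 t phiR := by
  unfold srpTrajProb Mval
  apply Finset.sum_le_sum
  intro σ _
  by_cases h : σ 0 = S0 ∧ σ (Fin.last t) ≠ fun _ => true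
  · rw [if_pos h]
    unfold wt
    rw [if_pos h.1]
    exact le_mul_of_one_le_right
      (Finset.prod_nonneg fun s _ => srpStepProb_nonneg hp0 hp1 _ _)
      (phiR_ge_one h.2)
  · rw [if_neg h]
    exact mul_nonneg (wt_nonneg hp0 hp1 S0 σ) (phiR_nonneg _)

end Traj

/-- **Fast convergence of Simplified Rational Pavlov on the cycle.**
For every `p ∈ [0.699, 1]` there is a constant `ω > 0` such that for every `n ≥ 3`,
every initial configuration `S0` and every `ε ∈ (0,1)`: after any number
`t ≥ (n/ω)·log(n/ε)` of steps, the probability that the configuration is not the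
all-cooperate configuration is at most `ε`. -/
theorem srp_fast_convergence (p : ℝ) (hp : p ∈ Set.Icc (0.699 : ℝ) 1) :
    ∃ ω : ℝ, 0 < ω ∧
      ∀ (n : ℕ) [NeZero n], 3 ≤ n → ∀ S0 : Config n, ∀ ε : ℝ, ε ∈ Set.Ioo (0 : ℝ) 1 →
        ∀ t : ℕ, ((n : ℝ) / ω) * Real.log ((n : ℝ) / ε) ≤ (t : ℝ) →
          srpTrajProb p S0 t (fun σ => σ (Fin.last t) ≠ fun _ => true) ≤ ε := by
  have hp699 : (699:ℝ)/1000 ≤ p := by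
    have h := hp.1
    norm_num at h ⊢
    linarith
  have hp1 : p ≤ 1 := hp.2
  have hp0 : (0:ℝ) ≤ p := by linarith
  refine ⟨1/60800, by norm_num, ?_⟩
  intro n _ hn3 S0 ε hε t ht
  obtain ⟨hε0, hε1⟩ := hε
  have hn0 : (0:ℝ) < (n:ℝ) := by exact_mod_cast (by omega : 0 < n)
  have hn3R : (3:ℝ) ≤ (n:ℝ) := by exact_mod_cast hn3
  have hNε : (0:ℝ) < (n:ℝ)/ε := by positivity
  have hq0 : (0:ℝ) ≤ 1 - 1/(20*(n:ℝ)) := by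
    have h1 : 1/(20*(n:ℝ)) ≤ 1/20 := by
      rw [div_le_div_iff₀ (by positivity) (by norm_num)]
      nlinarith
    linarith
  have hL1 : 1 ≤ Real.log ((n:ℝ)/ε) := by
    rw [Real.le_log_iff_exp_le hNε]
    have h3 : (3:ℝ) ≤ (n:ℝ)/ε := by
      have h4 : (n:ℝ) ≤ (n:ℝ)/ε := by
        rw [le_div_iff₀ hε0]; nlinarith
      linarith
    have := Real.exp_one_lt_d9
    linarith
  have ht' : 60800 * (n:ℝ) * Real.log ((n:ℝ)/ε) ≤ (t:ℝ) := by
    have hrw : ((n:ℝ)/(1/60800)) = 60800 * (n:ℝ) := by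
      field_simp
    calc 60800 * (n:ℝ) * Real.log ((n:ℝ)/ε)
        = ((n:ℝ)/(1/60800)) * Real.log ((n:ℝ)/ε) := by rw [hrw]
      _ ≤ (t:ℝ) := ht
  have h1 : srpTrajProb p S0 t (fun σ => σ (Fin.last t) ≠ fun _ => true)
      ≤ (1 - 1/(20*(n:ℝ)))^t * phiR S0 :=
    (traj_le_Mval hp0 hp1 S0 t).trans (Mval_phi_le hn3 hp699 hp1 S0 t)
  have h2 : (1 - 1/(20*(n:ℝ)))^t * phiR S0 ≤ (1 - 1/(20*(n:ℝ)))^t * (3039 * (n:ℝ)) :=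
    mul_le_mul_of_nonneg_left (phiR_le S0) (pow_nonneg hq0 t)
  have h3 : (1 - 1/(20*(n:ℝ)))^t ≤ Real.exp (-((t:ℝ)/(20*(n:ℝ)))) := by
    have hbase : 1 - 1/(20*(n:ℝ)) ≤ Real.exp (-(1/(20*(n:ℝ)))) := by
      have := Real.add_one_le_exp (-(1/(20*(n:ℝ))))
      linarith
    calc (1 - 1/(20*(n:ℝ)))^t ≤ (Real.exp (-(1/(20*(n:ℝ)))))^t :=
          pow_le_pow_left₀ hq0 hbase t
      _ = Real.exp (-((t:ℝ)/(20*(n:ℝ)))) := by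
          rw [← Real.exp_nat_mul]
          congr 1
          ring
  have hexp : 3039 * (n:ℝ) * Real.exp (-((t:ℝ)/(20*(n:ℝ)))) ≤ ε := by
    have hlog3039 : Real.log 3039 ≤ 3038 := by
      have := Real.log_le_sub_one_of_pos (show (0:ℝ) < 3039 by norm_num)
      linarith
    have hx : Real.log (3039 * (n:ℝ)/ε) ≤ (t:ℝ)/(20*(n:ℝ)) := by
      have hsplit : Real.log (3039 * (n:ℝ)/ε) = Real.log 3039 + Real.log ((n:ℝ)/ε) := by
        rw [show 3039 * (n:ℝ)/ε = 3039 * ((n:ℝ)/ε) by ring,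
          Real.log_mul (by norm_num) (ne_of_gt hNε)]
      rw [hsplit, le_div_iff₀ (by positivity : (0:ℝ) < 20*(n:ℝ))]
      nlinarith [ht', hL1, hlog3039, hn3R,
        mul_nonneg (le_of_lt hn0) (by linarith : (0:ℝ) ≤ Real.log ((n:ℝ)/ε) - 1),
        mul_nonneg (le_of_lt hn0) (by linarith : (0:ℝ) ≤ 3038 - Real.log 3039)]
    calc 3039 * (n:ℝ) * Real.exp (-((t:ℝ)/(20*(n:ℝ))))
        ≤ 3039 * (n:ℝ) * Real.exp (-(Real.log (3039 * (n:ℝ)/ε))) := by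
          apply mul_le_mul_of_nonneg_left _ (by positivity)
          exact Real.exp_le_exp.mpr (by linarith)
      _ = ε := by
          rw [Real.exp_neg, Real.exp_log (by positivity)]
          field_simp
  calc srpTrajProb p S0 t (fun σ => σ (Fin.last t) ≠ fun _ => true)
      ≤ (1 - 1/(20*(n:ℝ)))^t * phiR S0 := h1
    _ ≤ (1 - 1/(20*(n:ℝ)))^t * (3039 * (n:ℝ)) := h2
    _ ≤ Real.exp (-((t:ℝ)/(20*(n:ℝ)))) * (3039 * (n:ℝ)) :=
        mul_le_mul_of_nonneg_right h3 (by positivity)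
    _ = 3039 * (n:ℝ) * Real.exp (-((t:ℝ)/(20*(n:ℝ)))) := by ring
    _ ≤ ε := hexp
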